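/- arXiv:1707.06259 — 5 statements merged into one kernel-verified Lean document; each statement's English description precedes it below -/
import Mathlib

section
/- Let λ be a partition of d with k = ℓ(λ) parts and let 0 < q < 1. Then the specialization of the monomial symmetric function m_λ at the geometric sequence (q, q², q³, …), namely (1/|aut(λ)|) Σ_{σ ∈ S_k} Σ_{1 ≤ i_1 < i_2 < … < i_k} q^{i_1 λ_{σ(1)} + i_2 λ_{σ(2)} + … + i_k λ_{σ(k)}}, converges and equals w_q(λ) = (1/|aut(λ)|) Σ_{σ ∈ S_k} ∏_{j=1}^{k} q^{S_j(σ)} / (1 − q^{S_j(σ)}), where S_j(σ) := λ_{σ(1)} + … + λ_{σ(j)}. -/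
open scoped Classical

/-- `|aut(λ)| = ∏ᵢ mᵢ(λ)!` where `mᵢ(λ)` is the number of parts equal to `i`. -/
def autCard {d : ℕ} (P : Nat.Partition d) : ℕ :=
  ∏ i ∈ P.parts.toFinset, (P.parts.count i).factorial

/-- The quantum weight `w_q(λ) = (1/|aut(λ)|) Σ_{σ ∈ S_k} ∏_{j=1}^k q^{S_j(σ)}/(1 - q^{S_j(σ)})`,
where `S_j(σ) = λ_{σ(1)} + … + λ_{σ(j)}` (the value does not depend on the ordering of the parts,
since we sum over all permutations). -/
noncomputable def wq (q : ℝ) {d : ℕ} (P : Nat.Partition d) : ℝ :=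
  (1 / (autCard P : ℝ)) *
    ∑ σ : Equiv.Perm (Fin P.parts.toList.length),
      ∏ j : Fin P.parts.toList.length,
        (q ^ (∑ i ∈ Finset.univ.filter (fun i => i ≤ j), P.parts.toList.get (σ i)) /
          (1 - q ^ (∑ i ∈ Finset.univ.filter (fun i => i ≤ j), P.parts.toList.get (σ i))))

/-!
Write a strictly increasing positive sequence `v` as the partial sums `v j = ∑_{i ≤ j} (a i + 1)`
of an arbitrary `a : Fin k → ℕ`. Abel summation turns the exponent `∑ j, v j * c j` into
`∑ i, (a i + 1) * T i` with tail sums `T i = ∑_{j ≥ i} c j`, so for fixed `σ` the inner sum is a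
product of `k` geometric series `∏ i, q ^ T i / (1 - q ^ T i)`. The tail sums of `λ ∘ σ` are the
prefix sums `S_j` of `λ ∘ σ ∘ rev`, and `σ ↦ σ * rev` permutes `S_k`.
-/

open Finset Order

theorem hasSum_pow_succ_mul {q : ℝ} (hq0 : 0 ≤ q) (hq1 : q < 1) {s : ℕ} (hs : s ≠ 0) :
    HasSum (fun n : ℕ => q ^ ((n + 1) * s)) (q ^ s / (1 - q ^ s)) := by
  have h := (hasSum_geometric_of_lt_one (by positivity) (pow_lt_one₀ hq0 hq1 hs)).mul_left (q ^ s)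
  simp_rw [← pow_succ', ← pow_mul, mul_comm s] at h
  exact h

theorem hasSum_prod_of_fintype_of_nonneg {α β : Type*} [Fintype α] {f : α × β → ℝ} (hf : 0 ≤ f)
    {g : α → ℝ} (h : ∀ a, HasSum (fun b => f (a, b)) (g a)) : HasSum f (∑ a, g a) := by
  have hs : Summable f :=
    (summable_prod_of_nonneg hf).2 ⟨fun a => (h a).summable, .of_finite⟩
  rw [← (hs.hasSum.prod_fiberwise h).unique (hasSum_fintype g)]
  exact hs.hasSum

theorem hasSum_pi_fin_prod_of_nonneg {β : Type*} {n : ℕ} {g : Fin n → β → ℝ} {t : Fin n → ℝ}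
    (hg : ∀ i b, 0 ≤ g i b) (h : ∀ i, HasSum (g i) (t i)) :
    HasSum (fun c : Fin n → β => ∏ i, g i (c i)) (∏ i, t i) := by
  induction n with
  | zero => simp
  | succ n ih =>
    have htail := ih (fun i => hg i.succ) fun i => h i.succ
    have htail_nonneg : 0 ≤ fun c : Fin n → β => ∏ i, g i.succ (c i) := fun c =>
      prod_nonneg fun i _ => hg i.succ (c i)
    have hsummable := (h 0).summable.mul_of_nonneg htail.summable (hg 0) htail_nonneg
    have hmul := (h 0).mul htail hsummable
    have hcomp : (fun c : Fin (n + 1) → β => ∏ i, g i (c i)) ∘ Fin.consEquiv (fun _ => β) =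
        fun x => g 0 x.1 * ∏ i, g i.succ (x.2 i) := by
      ext x
      simp [Fin.prod_univ_succ]
    rw [Fin.prod_univ_succ, ← (Fin.consEquiv fun _ => β).hasSum_iff, hcomp]
    exact hmul

theorem sum_sum_Iic_mul {ι R : Type*} [Fintype ι] [Preorder ι] [LocallyFiniteOrderBot ι]
    [LocallyFiniteOrderTop ι] [CommSemiring R] (f g : ι → R) :
    ∑ j, (∑ i ∈ Iic j, f i) * g j = ∑ i, f i * ∑ j ∈ Ici i, g j := by
  simp_rw [sum_mul, mul_sum]
  exact sum_comm' fun j i => by simp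

section SuccPartialSums

variable {ι : Type*} [LinearOrder ι] [LocallyFiniteOrderBot ι]

def succPartialSums (a : ι → ℕ) (j : ι) : ℕ := ∑ i ∈ Iic j, (a i + 1)

theorem succPartialSums_eq_sum_Iio_add (a : ι → ℕ) (j : ι) :
    succPartialSums a j = ∑ i ∈ Iio j, (a i + 1) + (a j + 1) := by
  rw [succPartialSums, ← Iio_insert, sum_insert notMem_Iio_self, add_comm]

theorem one_le_succPartialSums (a : ι → ℕ) (j : ι) : 1 ≤ succPartialSums a j := by
  rw [succPartialSums_eq_sum_Iio_add]
  omega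

theorem strictMono_succPartialSums (a : ι → ℕ) : StrictMono (succPartialSums a) := by
  intro i j hij
  have : succPartialSums a i ≤ ∑ l ∈ Iio j, (a l + 1) :=
    sum_le_sum_of_subset fun l hl => mem_Iio.2 ((mem_Iic.1 hl).trans_lt hij)
  rw [succPartialSums_eq_sum_Iio_add a j]
  omega

theorem succPartialSums_of_isMin (a : ι → ℕ) {j : ι} (hj : IsMin j) :
    succPartialSums a j = a j + 1 := by
  rw [succPartialSums_eq_sum_Iio_add, Iio_eq_empty.2 hj, sum_empty, zero_add]

variable [PredOrder ι]

theorem succPartialSums_of_not_isMin (a : ι → ℕ) {j : ι} (hj : ¬IsMin j) :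
    succPartialSums a j = succPartialSums a (pred j) + (a j + 1) := by
  rw [succPartialSums_eq_sum_Iio_add, succPartialSums, Iic_pred_eq_Iio_of_not_isMin hj]

noncomputable def succDiffs (v : ι → ℕ) (j : ι) : ℕ :=
  if IsMin j then v j - 1 else v j - v (pred j) - 1

theorem succDiffs_succPartialSums (a : ι → ℕ) : succDiffs (succPartialSums a) = a := by
  ext j
  by_cases hj : IsMin j
  · simp [succDiffs, hj, succPartialSums_of_isMin]
  · simp [succDiffs, hj, succPartialSums_of_not_isMin a hj]

theorem succPartialSums_succDiffs [WellFoundedLT ι] {v : ι → ℕ} (hv : StrictMono v)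
    (hv1 : ∀ j, 1 ≤ v j) : succPartialSums (succDiffs v) = v := by
  ext j
  induction j using WellFoundedLT.induction with
  | _ j ih =>
    by_cases hj : IsMin j
    · rw [succPartialSums_of_isMin _ hj, succDiffs, if_pos hj]
      have := hv1 j
      omega
    · rw [succPartialSums_of_not_isMin _ hj, ih _ (pred_lt_of_not_isMin hj), succDiffs, if_neg hj]
      have := hv (pred_lt_of_not_isMin hj)
      omega

variable (ι) in
noncomputable def succPartialSumsEquiv [WellFoundedLT ι] :
    (ι → ℕ) ≃ {v : ι → ℕ // StrictMono v ∧ ∀ j, 1 ≤ v j} where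
  toFun a := ⟨succPartialSums a, strictMono_succPartialSums a, one_le_succPartialSums a⟩
  invFun v := succDiffs v.1
  left_inv := succDiffs_succPartialSums
  right_inv v := Subtype.ext (succPartialSums_succDiffs v.2.1 v.2.2)

end SuccPartialSums

theorem hasSum_pow_sum_mul_of_strictMono {q : ℝ} (hq0 : 0 ≤ q) (hq1 : q < 1) {k : ℕ}
    {c : Fin k → ℕ} (hc : ∀ j, 0 < c j) :
    HasSum (fun v : {v : Fin k → ℕ // StrictMono v ∧ ∀ j, 1 ≤ v j} => q ^ ∑ j, v.1 j * c j)
      (∏ i, q ^ (∑ j ∈ Ici i, c j) / (1 - q ^ (∑ j ∈ Ici i, c j))) := by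
  refine (succPartialSumsEquiv (Fin k)).hasSum_iff.1 ?_
  have hT : ∀ i, ∑ j ∈ Ici i, c j ≠ 0 := fun i =>
    (sum_pos (fun j _ => hc j) ⟨i, mem_Ici.2 le_rfl⟩).ne'
  convert hasSum_pi_fin_prod_of_nonneg (fun i n => by positivity)
    fun i => hasSum_pow_succ_mul hq0 hq1 (hT i) using 2 with a
  simp only [Function.comp_apply, succPartialSumsEquiv, Equiv.coe_fn_mk, succPartialSums]
  rw [sum_sum_Iic_mul, prod_pow_eq_pow_sum]

theorem sum_Iic_comp_rev {M : Type*} [AddCommMonoid M] {k : ℕ} (c : Fin k → M) (i : Fin k) :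
    ∑ l ∈ Iic i, c (Fin.rev l) = ∑ j ∈ Ici i.rev, c j := by
  rw [← Fin.map_revPerm_Iic, sum_map]
  rfl

/-- For a partition `λ` of `d` with `k = ℓ(λ)` parts and `0 < q < 1`, the
specialization of the monomial symmetric function `m_λ` at `(q, q², q³, …)`, i.e.
`(1/|aut(λ)|) Σ_{σ ∈ S_k} Σ_{1 ≤ i₁ < … < i_k} q^{i₁λ_{σ(1)} + … + i_kλ_{σ(k)}}`,
converges and equals `w_q(λ)`. -/
theorem zero_temp_stmt1 (d : ℕ) (P : Nat.Partition d) (q : ℝ) (hq0 : 0 < q) (hq1 : q < 1) :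
    HasSum
      (fun sv : Equiv.Perm (Fin P.parts.toList.length) ×
          {v : Fin P.parts.toList.length → ℕ // StrictMono v ∧ ∀ t, 1 ≤ v t} =>
        (1 / (autCard P : ℝ)) *
          q ^ (∑ j, sv.2.1 j * P.parts.toList.get (sv.1 j)))
      (wq q P) := by
  have hparts : ∀ j, 0 < P.parts.toList.get j := fun j =>
    P.parts_pos (Multiset.mem_toList.1 (List.get_mem _ _))
  refine HasSum.mul_left _ ?_
  rw [← Equiv.sum_comp (Equiv.mulRight Fin.revPerm)]
  refine hasSum_prod_of_fintype_of_nonneg (fun _ => by positivity) fun σ => ?_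
  convert hasSum_pow_sum_mul_of_strictMono hq0.le hq1 fun j => hparts (σ j) using 1
  refine Fintype.prod_equiv Fin.revPerm _ _ fun j => ?_
  simp only [filter_ge_eq_Iic, Equiv.coe_mulRight, Equiv.Perm.mul_apply, Fin.revPerm_apply,
    sum_Iic_comp_rev (fun l => P.parts.toList.get (σ l))]
end

section
/- Let d ≥ 2. Then there exist a constant C > 0 and δ ∈ (0,1) such that for all q ∈ (0, δ): Σ_{λ} w_q(λ) ≤ C · q^{d+2}, where the sum runs over all partitions λ of d with λ ≠ (d) and λ ≠ (d−1,1). -/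
open scoped Classical

def hook (d : ℕ) (hd : 2 ≤ d) : Nat.Partition d where
  parts := {d - 1, 1}
  parts_pos := by
    intro i hi
    simp only [Multiset.insert_eq_cons, Multiset.mem_cons, Multiset.mem_singleton] at hi
    rcases hi with h | h <;> omega
  parts_sum := by
    simp only [Multiset.insert_eq_cons, Multiset.sum_cons, Multiset.sum_singleton]
    omega

/-! For `q ≤ 1/2` every factor `q^S / (1 - q^S)` is at most `2 q^S`, so the summand of `w_q(λ)`
indexed by `σ` is at most `2^k q^(S_1 + ⋯ + S_k)`. The last two partial sums are `S_k = d` and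
`S_{k-1} = d - λ_{σ(k)}`, and `λ ≠ (d), (d-1,1)` means exactly that every part is at most `d - 2`;
hence `S_1 + ⋯ + S_k ≥ d + 2` for every ordering of the parts. -/

open Finset

def prefixSum {k : ℕ} (a : Fin k → ℕ) (j : Fin k) : ℕ :=
  ∑ i ∈ univ.filter (fun i => i ≤ j), a i

lemma prefixSum_last {n : ℕ} (a : Fin (n + 1) → ℕ) :
    prefixSum a (Fin.last n) = ∑ i, a i := by
  simp [prefixSum, Fin.le_last]

lemma prefixSum_castSucc_last_add {n : ℕ} (a : Fin (n + 2) → ℕ) :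
    prefixSum a (Fin.last n).castSucc + a (Fin.last (n + 1)) = ∑ i, a i := by
  have h : univ.filter (fun i => i ≤ (Fin.last n).castSucc) = {Fin.last (n + 1)}ᶜ := by
    ext i
    simp only [mem_filter, mem_univ, true_and, mem_compl, mem_singleton, Fin.le_def,
      Fin.ext_iff, Fin.val_castSucc, Fin.val_last]
    omega
  rw [prefixSum, h, ← sum_singleton a (Fin.last (n + 1)), sum_compl_add_sum]

lemma two_mul_sum_le_sum_prefixSum_add_last {n : ℕ} (a : Fin (n + 2) → ℕ) :
    2 * ∑ i, a i ≤ ∑ j, prefixSum a j + a (Fin.last (n + 1)) := by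
  have hsplit : prefixSum a (Fin.last n).castSucc + prefixSum a (Fin.last (n + 1))
      ≤ ∑ j, prefixSum a j := by
    rw [Fin.sum_univ_castSucc, Fin.sum_univ_castSucc]
    omega
  have hlast : prefixSum a (Fin.last (n + 1)) = ∑ i, a i := prefixSum_last a
  have := prefixSum_castSucc_last_add a
  omega

lemma sum_add_two_le_sum_prefixSum {k : ℕ} (a : Fin k → ℕ) (hpos : 0 < ∑ i, a i)
    (hsmall : ∀ i, a i + 2 ≤ ∑ i, a i) :
    ∑ i, a i + 2 ≤ ∑ j, prefixSum a j := by
  match k, a with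
  | 0, a => simp at hpos
  | 1, a => simpa using hsmall 0
  | n + 2, a =>
    have := two_mul_sum_le_sum_prefixSum_add_last a
    have := hsmall (Fin.last (n + 1))
    omega

lemma Multiset.eq_replicate_sum_one_of_sum_le_one {t : Multiset ℕ} (hpos : ∀ x ∈ t, 0 < x)
    (hle : t.sum ≤ 1) : t = Multiset.replicate t.sum 1 := by
  have hone : ∀ x ∈ t, x = 1 := fun x hx =>
    le_antisymm ((Multiset.le_sum_of_mem hx).trans hle) (hpos x hx)
  have hcard := Multiset.eq_replicate_card.2 hone
  rw [hcard, Multiset.sum_replicate, smul_eq_mul, mul_one] at *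

lemma add_two_le_of_mem_parts {d : ℕ} (hd : 2 ≤ d) {P : Nat.Partition d}
    (h₁ : P ≠ Nat.Partition.indiscrete d) (h₂ : P ≠ hook d hd) {i : ℕ} (hi : i ∈ P.parts) :
    i + 2 ≤ d := by
  obtain ⟨t, ht⟩ := Multiset.exists_cons_of_mem hi
  have hsum : i + t.sum = d := by rw [← P.parts_sum, ht, Multiset.sum_cons]
  have htpos : ∀ x ∈ t, 0 < x := fun x hx => P.parts_pos (ht ▸ Multiset.mem_cons_of_mem hx)
  by_contra! hlt
  have hrest := Multiset.eq_replicate_sum_one_of_sum_le_one htpos (by omega)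
  obtain h0 | h1 : t.sum = 0 ∨ t.sum = 1 := by omega
  · refine h₁ (Nat.Partition.ext ?_)
    rw [ht, hrest, h0, Nat.Partition.indiscrete_parts (by omega)]
    simp only [Multiset.replicate_zero, Multiset.cons_zero]
    congr 1; omega
  · refine h₂ (Nat.Partition.ext ?_)
    rw [ht, hrest, h1]
    show i ::ₘ {1} = {d - 1, 1}
    congr 1; omega

lemma div_one_sub_le_two_mul {K : Type*} [Field K] [LinearOrder K] [IsStrictOrderedRing K]
    {x : K} (h0 : 0 ≤ x) (h : x ≤ 1 / 2) : x / (1 - x) ≤ 2 * x := by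
  rw [div_le_iff₀ (by linarith)]
  nlinarith

lemma pow_div_one_sub_pow_nonneg {q : ℝ} (hq0 : 0 ≤ q) (hq1 : q ≤ 1) (e : ℕ) :
    0 ≤ q ^ e / (1 - q ^ e) :=
  div_nonneg (pow_nonneg hq0 e) (sub_nonneg.2 (pow_le_one₀ hq0 hq1))

lemma prod_pow_div_one_sub_pow_le {ι : Type*} (s : Finset ι) {e : ι → ℕ}
    (he : ∀ j ∈ s, e j ≠ 0) {q : ℝ} (hq0 : 0 ≤ q) (hq : q ≤ 1 / 2) :
    ∏ j ∈ s, q ^ e j / (1 - q ^ e j) ≤ 2 ^ s.card * q ^ ∑ j ∈ s, e j := by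
  have hq1 : q ≤ 1 := by linarith
  calc ∏ j ∈ s, q ^ e j / (1 - q ^ e j) ≤ ∏ j ∈ s, 2 * q ^ e j :=
        prod_le_prod (fun j _ => pow_div_one_sub_pow_nonneg hq0 hq1 _) fun j hj =>
          div_one_sub_le_two_mul (pow_nonneg hq0 _) ((pow_le_of_le_one hq0 hq1 (he j hj)).trans hq)
    _ = 2 ^ s.card * q ^ ∑ j ∈ s, e j := by
        rw [prod_mul_distrib, prod_const, prod_pow_eq_pow_sum]

lemma prod_prefixSum_le {k : ℕ} (a : Fin k → ℕ) (hpos : ∀ i, 0 < a i)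
    (hsmall : ∀ i, a i + 2 ≤ ∑ i, a i) (hsum : 0 < ∑ i, a i) {q : ℝ} (hq0 : 0 ≤ q)
    (hq : q ≤ 1 / 2) :
    ∏ j, q ^ prefixSum a j / (1 - q ^ prefixSum a j) ≤ 2 ^ k * q ^ (∑ i, a i + 2) := by
  have hprefix : ∀ j ∈ univ, prefixSum a j ≠ 0 := fun j _ =>
    (hpos j).trans_le (single_le_sum (fun i _ => Nat.zero_le (a i)) (by simp)) |>.ne'
  calc _ ≤ 2 ^ (univ : Finset (Fin k)).card * q ^ ∑ j, prefixSum a j :=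
        prod_pow_div_one_sub_pow_le univ hprefix hq0 hq
    _ ≤ 2 ^ k * q ^ (∑ i, a i + 2) := by
        rw [card_univ, Fintype.card_fin]
        exact mul_le_mul_of_nonneg_left (pow_le_pow_of_le_one hq0 (by linarith)
          (sum_add_two_le_sum_prefixSum a hsum hsmall)) (by positivity)

lemma wq_le {d : ℕ} (hd : 2 ≤ d) {P : Nat.Partition d} (hP : ∀ i ∈ P.parts, i + 2 ≤ d)
    {q : ℝ} (hq0 : 0 ≤ q) (hq : q ≤ 1 / 2) :
    wq q P ≤ (P.parts.toList.length.factorial * 2 ^ P.parts.toList.length) * q ^ (d + 2) := by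
  set L := P.parts.toList
  have hmem : ∀ i, L.get i ∈ P.parts := fun i => Multiset.mem_toList.1 (L.get_mem i)
  have hsum : ∀ σ : Equiv.Perm (Fin L.length), ∑ i, L.get (σ i) = d := fun σ => by
    rw [Equiv.sum_comp σ L.get, ← P.parts_sum, ← Multiset.sum_toList]
    exact Fin.sum_univ_getElem L
  set T : Equiv.Perm (Fin L.length) → ℝ := fun σ =>
    ∏ j, q ^ prefixSum (fun i => L.get (σ i)) j / (1 - q ^ prefixSum (fun i => L.get (σ i)) j)
  have hterm : ∀ σ, T σ ≤ 2 ^ L.length * q ^ (d + 2) := fun σ => by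
    simpa only [T, hsum σ] using prod_prefixSum_le (fun i => L.get (σ i))
      (fun i => P.parts_pos (hmem _)) (fun i => (hsum σ).symm ▸ hP _ (hmem _))
      (by rw [hsum σ]; omega) hq0 hq
  have hnonneg : 0 ≤ ∑ σ, T σ :=
    sum_nonneg fun σ _ => prod_nonneg fun j _ => pow_div_one_sub_pow_nonneg hq0 (by linarith) _
  have haut : (1 : ℝ) ≤ autCard P := by
    exact_mod_cast Nat.one_le_iff_ne_zero.2 (prod_pos fun i _ => Nat.factorial_pos _).ne'
  calc wq q P = (1 / (autCard P : ℝ)) * ∑ σ, T σ := rfl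
    _ ≤ ∑ σ, T σ := mul_le_of_le_one_left hnonneg ((div_le_one (by linarith)).2 haut)
    _ ≤ ∑ _σ : Equiv.Perm (Fin L.length), 2 ^ L.length * q ^ (d + 2) :=
        sum_le_sum fun σ _ => hterm σ
    _ = (L.length.factorial * 2 ^ L.length) * q ^ (d + 2) := by
        rw [sum_const, card_univ, Fintype.card_perm, Fintype.card_fin, nsmul_eq_mul, mul_assoc]

/-- For `d ≥ 2` there exist `C > 0` and `δ ∈ (0,1)` such that for all
`q ∈ (0,δ)`, the sum of `w_q(λ)` over all partitions `λ` of `d` with `λ ≠ (d)` and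
`λ ≠ (d-1,1)` is at most `C·q^{d+2}`. -/
theorem zero_temp_stmt4 (d : ℕ) (hd : 2 ≤ d) :
    ∃ C : ℝ, 0 < C ∧ ∃ δ ∈ Set.Ioo (0 : ℝ) 1, ∀ q ∈ Set.Ioo (0 : ℝ) δ,
      ∑ P ∈ Finset.univ.filter
          (fun P : Nat.Partition d => P ≠ Nat.Partition.indiscrete d ∧ P ≠ hook d hd),
        wq q P ≤ C * q ^ (d + 2) := by
  set S := univ.filter
    (fun P : Nat.Partition d => P ≠ Nat.Partition.indiscrete d ∧ P ≠ hook d hd)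
  set B : Nat.Partition d → ℝ := fun P =>
    P.parts.toList.length.factorial * 2 ^ P.parts.toList.length
  refine ⟨∑ P ∈ S, B P + 1, by positivity, 1 / 2, ⟨by norm_num, by norm_num⟩, fun q hq => ?_⟩
  calc ∑ P ∈ S, wq q P ≤ ∑ P ∈ S, B P * q ^ (d + 2) := sum_le_sum fun P hP =>
        have hne := (mem_filter.1 hP).2
        wq_le hd (fun i hi => add_two_le_of_mem_parts hd hne.1 hne.2 hi) hq.1.le hq.2.le
    _ = (∑ P ∈ S, B P) * q ^ (d + 2) := (sum_mul _ _ _).symm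
    _ ≤ (∑ P ∈ S, B P + 1) * q ^ (d + 2) :=
        mul_le_mul_of_nonneg_right (by linarith) (pow_nonneg hq.1.le _)
end

section
/- Let d ≥ 2 and let f be any real-valued function on the set of partitions of d. Then there exist a constant C > 0 and δ ∈ (0,1) such that for all q ∈ (0, δ): | Σ_{λ ⊢ d} f(λ) · p(λ) · w_q(λ) − f((d)) · p(d) · q^d − f((d−1,1)) · p(d−1) · q^{d+1} | ≤ C · q^{d+2}. -/
open scoped Classical

/-- `p(k)`, the number of partitions of the nonnegative integer `k` (so `p(0) = 1`). -/
def pNum (k : ℕ) : ℕ := Fintype.card (Nat.Partition k)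

/-- `p(λ) = ∏ⱼ p(λⱼ)`, the product of partition numbers of the parts of `λ`. -/
def pOf {d : ℕ} (P : Nat.Partition d) : ℕ := (P.parts.map pNum).prod

/-!
Write `g_n(q) = q^n / (1 - q^n) = q^n + O(q^{2n})`. The term of a permutation `σ` in `w_q(λ)`
is `∏_j g_{S_j}(q) = O(q^{N(σ)})` with `N(σ) = Σ_j S_j(σ)`. The last partial sum is `d` and
each of the other `k - 1` is at least the smallest part `m`, so `N(σ) ≥ d + (k - 1) m ≥ d + 2`
except for `λ = (d)` and `λ = (d - 1, 1)`. For these two, `w_q(d) = g_d = q^d + O(q^{2d})` and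
`w_q(d - 1, 1) = (g_{d-1} + g_1) g_d / |aut| = q^{d+1} + O(q^{d+2})`; for `d = 2` both
orderings give `g_1 g_2` and `|aut| = 2`. All estimates are big-O as `q → 0`.
-/

open Filter Topology Asymptotics Finset

noncomputable def qFrac (q : ℝ) (n : ℕ) : ℝ := q ^ n / (1 - q ^ n)

lemma isBigO_pow_pow_nhds_zero_of_le {m n : ℕ} (h : m ≤ n) :
    (· ^ n : ℝ → ℝ) =O[𝓝 0] (· ^ m) := by
  rcases h.eq_or_lt with rfl | h
  · exact isBigO_refl _ _
  · exact (isLittleO_pow_pow h).isBigO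

-- For `n = 0` the function is `0⁻¹ = 0`.
lemma isBigO_inv_one_sub_pow (n : ℕ) :
    (fun q : ℝ => (1 - q ^ n)⁻¹) =O[𝓝 0] (fun _ => (1 : ℝ)) := by
  rcases Nat.eq_zero_or_pos n with rfl | hn
  · simpa using isBigO_zero (fun _ : ℝ => (1 : ℝ)) (𝓝 (0 : ℝ)) (E' := ℝ)
  · exact Tendsto.isBigO_one ℝ <|
      (tendsto_const_nhds.sub ((continuous_pow n).tendsto 0)).inv₀ (by simp [hn.ne'])

lemma isBigO_qFrac (n : ℕ) : (qFrac · n) =O[𝓝 0] (· ^ n) := by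
  simpa [qFrac, div_eq_mul_inv] using
    (isBigO_refl (· ^ n : ℝ → ℝ) _).mul (isBigO_inv_one_sub_pow n)

lemma isBigO_qFrac_sub_pow {n : ℕ} (hn : n ≠ 0) :
    (fun q => qFrac q n - q ^ n) =O[𝓝 0] (· ^ (2 * n)) := by
  have hlt : ∀ᶠ q : ℝ in 𝓝 0, q ^ n < 1 :=
    ((continuous_pow n).tendsto 0).eventually_lt_const (by simp [hn])
  have heq : (fun q => q ^ n * qFrac q n) =ᶠ[𝓝 0] fun q => qFrac q n - q ^ n := by
    filter_upwards [hlt] with q hq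
    rw [qFrac]
    field_simp [(sub_pos.2 hq).ne']
    ring
  exact ((isBigO_refl (· ^ n : ℝ → ℝ) _).mul (isBigO_qFrac n)).congr' heq
    (Eventually.of_forall fun q => by ring)

-- `partialSum l σ j` is the paper's `S_{j+1}(σ)`: indices start at `0`.
def partialSum (l : List ℕ) (σ : Equiv.Perm (Fin l.length)) (j : Fin l.length) : ℕ :=
  ∑ i ∈ univ.filter (· ≤ j), l.get (σ i)

noncomputable def listWeight (q : ℝ) (l : List ℕ) : ℝ :=
  ∑ σ : Equiv.Perm (Fin l.length), ∏ j, qFrac q (partialSum l σ j)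

lemma listWeight_pair (q : ℝ) (a b : ℕ) :
    listWeight q [a, b] = (qFrac q a + qFrac q b) * qFrac q (a + b) := by
  have huniv : (univ : Finset (Equiv.Perm (Fin 2))) = {1, Equiv.swap 0 1} := by decide
  have hne : (1 : Equiv.Perm (Fin 2)) ≠ Equiv.swap 0 1 := by decide
  rw [listWeight, huniv,
    sum_pair (f := fun σ : Equiv.Perm (Fin [a, b].length) => ∏ j, qFrac q (partialSum [a, b] σ j))
      hne]
  simp [partialSum, Fin.prod_univ_two, sum_filter, Fin.sum_univ_two, add_comm b a, add_mul]

lemma listWeight_singleton (q : ℝ) (a : ℕ) : listWeight q [a] = qFrac q a := by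
  simp [listWeight, partialSum]

lemma le_partialSum {l : List ℕ} {m : ℕ} (hl : ∀ x ∈ l, m ≤ x) (σ : Equiv.Perm (Fin l.length))
    (j : Fin l.length) : m ≤ partialSum l σ j :=
  (hl _ (List.get_mem l (σ j))).trans <|
    single_le_sum (f := fun i => l.get (σ i)) (fun _ _ => Nat.zero_le _) (by simp)

lemma partialSum_eq_sum {l : List ℕ} (σ : Equiv.Perm (Fin l.length)) {j : Fin l.length}
    (hj : j.val + 1 = l.length) : partialSum l σ j = l.sum := by
  rw [partialSum, filter_true_of_mem fun i _ => Fin.le_def.2 (by omega),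
    Equiv.sum_comp σ l.get, ← List.sum_ofFn, List.ofFn_get]

lemma sum_add_mul_le_sum_partialSum {l : List ℕ} {m : ℕ} (hl : ∀ x ∈ l, m ≤ x)
    (σ : Equiv.Perm (Fin l.length)) : l.sum + (l.length - 1) * m ≤ ∑ j, partialSum l σ j := by
  rcases eq_or_ne l [] with rfl | hne
  · simp
  have hpos := List.length_pos_of_ne_nil hne
  let last : Fin l.length := ⟨l.length - 1, by omega⟩
  rw [← add_sum_erase _ _ (mem_univ last), partialSum_eq_sum σ (show last.val + 1 = l.length by
    simp only [last]; omega)]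
  have hcard : #(univ.erase last) = l.length - 1 := by simp
  gcongr
  simpa [hcard] using card_nsmul_le_sum (univ.erase last) _ m fun j _ => le_partialSum hl σ j

lemma isBigO_listWeight {l : List ℕ} {n : ℕ} (h : ∀ σ, n ≤ ∑ j, partialSum l σ j) :
    (listWeight · l) =O[𝓝 0] (· ^ n) := by
  refine IsBigO.fun_sum fun σ _ => ?_
  refine ((IsBigO.finsetProd fun j _ => isBigO_qFrac (partialSum l σ j)).trans ?_)
  simpa only [prod_pow_eq_pow_sum] using isBigO_pow_pow_nhds_zero_of_le (h σ)

lemma wq_eq_listWeight (q : ℝ) {d : ℕ} (P : Nat.Partition d) {l : List ℕ}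
    (h : P.parts.toList = l) : wq q P = 1 / autCard P * listWeight q l := by
  subst h
  rfl

lemma hook_parts {d : ℕ} (hd : 2 ≤ d) : (hook d hd).parts = {d - 1, 1} := rfl

namespace Nat.Partition

variable {d : ℕ}

lemma eq_indiscrete_of_card_parts_eq_one {P : d.Partition} (h : Multiset.card P.parts = 1) :
    P = indiscrete d := by
  obtain ⟨x, hx⟩ := Multiset.card_eq_one.1 h
  have hxd : x = d := by simpa [hx] using P.parts_sum
  have hx0 : x ≠ 0 := (P.parts_pos (by simp [hx])).ne'
  ext1
  rw [hx, indiscrete_parts (hxd ▸ hx0), hxd]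

lemma eq_hook_of_card_parts_eq_two (hd : 2 ≤ d) {P : d.Partition}
    (h : Multiset.card P.parts = 2) (h1 : 1 ∈ P.parts) : P = hook d hd := by
  obtain ⟨x, y, hxy⟩ := Multiset.card_eq_two.1 h
  have hsum : x + y = d := by simpa [hxy] using P.parts_sum
  ext1
  rw [hxy, hook_parts]
  rw [hxy] at h1
  rcases Multiset.mem_cons.1 h1 with rfl | h1
  · rw [show y = d - 1 by omega, Multiset.pair_comm]
  · rw [← Multiset.mem_singleton.1 h1] at hsum ⊢
    rw [show x = d - 1 by omega]

end Nat.Partition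

open Nat.Partition

lemma indiscrete_ne_hook {d : ℕ} (hd : 2 ≤ d) : indiscrete d ≠ hook d hd := by
  intro h
  simpa [indiscrete_parts (show d ≠ 0 by omega), hook_parts] using
    congrArg (Multiset.card ∘ parts) h

lemma wq_indiscrete (q : ℝ) {d : ℕ} (hd : d ≠ 0) : wq q (indiscrete d) = qFrac q d := by
  rw [wq_eq_listWeight q _ (by rw [indiscrete_parts hd, Multiset.toList_singleton]),
    listWeight_singleton]
  simp [autCard, indiscrete_parts hd]

lemma wq_of_card_parts_eq_two (q : ℝ) {d : ℕ} {P : d.Partition}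
    (h : Multiset.card P.parts = 2) :
    wq q P = 1 / autCard P * ((P.parts.map (qFrac q)).sum * qFrac q d) := by
  obtain ⟨a, b, hab⟩ := List.length_eq_two.1 (by rwa [Multiset.length_toList])
  have hparts : P.parts = {a, b} := by rw [← Multiset.coe_toList P.parts, hab]; rfl
  have hsum : a + b = d := by simpa [hparts] using P.parts_sum
  rw [wq_eq_listWeight q P hab, listWeight_pair, hparts, hsum]
  simp

lemma wq_hook (q : ℝ) {d : ℕ} (hd : 2 ≤ d) :
    wq q (hook d hd) = 1 / autCard (hook d hd) * ((qFrac q (d - 1) + qFrac q 1) * qFrac q d) := by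
  rw [wq_of_card_parts_eq_two q (by simp [hook_parts]), hook_parts]
  simp

lemma isBigO_qFrac_mul_qFrac_sub_pow {m n : ℕ} (hm : m ≠ 0) (hn : n ≠ 0) :
    (fun q => qFrac q m * qFrac q n - q ^ (m + n)) =O[𝓝 0] (· ^ (m + n + 1)) := by
  have hm' := (isBigO_qFrac_sub_pow hm).trans
    (isBigO_pow_pow_nhds_zero_of_le (show m + 1 ≤ 2 * m by omega))
  have hn' := (isBigO_qFrac_sub_pow hn).trans
    (isBigO_pow_pow_nhds_zero_of_le (show n + 1 ≤ 2 * n by omega))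
  have hsplit : ∀ q : ℝ, qFrac q m * qFrac q n - q ^ (m + n)
      = (qFrac q m - q ^ m) * qFrac q n + q ^ m * (qFrac q n - q ^ n) := fun q => by ring
  simp only [hsplit]
  refine IsBigO.add ?_ ?_
  · simpa only [← pow_add, show m + 1 + n = m + n + 1 by omega] using hm'.mul (isBigO_qFrac n)
  · simpa only [← pow_add, ← add_assoc] using (isBigO_refl (· ^ m : ℝ → ℝ) _).mul hn'

lemma isBigO_wq_indiscrete_sub_pow {d : ℕ} (hd : 2 ≤ d) :
    (fun q => wq q (indiscrete d) - q ^ d) =O[𝓝 0] (· ^ (d + 2)) := by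
  simpa only [wq_indiscrete _ (show d ≠ 0 by omega)] using
    (isBigO_qFrac_sub_pow (show d ≠ 0 by omega)).trans (isBigO_pow_pow_nhds_zero_of_le (by omega))

lemma isBigO_wq_hook_sub_pow {d : ℕ} (hd : 2 ≤ d) :
    (fun q => wq q (hook d hd) - q ^ (d + 1)) =O[𝓝 0] (· ^ (d + 2)) := by
  have hmain : (fun q => qFrac q 1 * qFrac q d - q ^ (d + 1)) =O[𝓝 0] (· ^ (d + 2)) := by
    simpa only [add_comm 1 d] using isBigO_qFrac_mul_qFrac_sub_pow one_ne_zero (by omega : d ≠ 0)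
  rcases hd.eq_or_lt with rfl | hd3
  · have haut : autCard (hook 2 hd) = 2 := by simp [autCard, hook_parts]
    refine hmain.congr_left fun q => ?_
    rw [wq_hook, haut]
    ring
  · have haut : autCard (hook d hd) = 1 := by
      simp [autCard, hook_parts, Multiset.count_cons, show 1 ≠ d - 1 by omega]
    have hrest : (fun q => qFrac q (d - 1) * qFrac q d) =O[𝓝 0] (· ^ (d + 2)) := by
      refine ((isBigO_qFrac _).mul (isBigO_qFrac d)).trans ?_
      simpa only [← pow_add] using isBigO_pow_pow_nhds_zero_of_le (show d + 2 ≤ d - 1 + d by omega)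
    refine (hrest.add hmain).congr_left fun q => ?_
    rw [wq_hook, haut]
    ring

lemma add_two_le_sum_partialSum {d : ℕ} (hd : 2 ≤ d) {P : d.Partition}
    (hA : P ≠ indiscrete d) (hB : P ≠ hook d hd) (σ : Equiv.Perm (Fin P.parts.toList.length)) :
    d + 2 ≤ ∑ j, partialSum P.parts.toList σ j := by
  have hsum : P.parts.toList.sum = d := by rw [Multiset.sum_toList, P.parts_sum]
  have hlen : P.parts.toList.length = Multiset.card P.parts := Multiset.length_toList _
  obtain ⟨m, hm, hlen_m⟩ : ∃ m, (∀ x ∈ P.parts.toList, m ≤ x) ∧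
      2 ≤ (P.parts.toList.length - 1) * m := by
    have hcard : 2 ≤ Multiset.card P.parts := by
      by_contra! hlt
      interval_cases h : Multiset.card P.parts
      · have hsum0 := P.parts_sum
        rw [Multiset.card_eq_zero.1 h, Multiset.sum_zero] at hsum0
        omega
      · exact hA (eq_indiscrete_of_card_parts_eq_one h)
    rcases hcard.eq_or_lt with hcard | hcard
    · refine ⟨2, fun x hx => ?_, by omega⟩
      have hx' := Multiset.mem_toList.1 hx
      have hx1 : x ≠ 1 := fun h1 => hB (eq_hook_of_card_parts_eq_two hd hcard.symm (h1 ▸ hx'))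
      have := P.parts_pos hx'
      omega
    · exact ⟨1, fun x hx => P.parts_pos (Multiset.mem_toList.1 hx), by omega⟩
  calc d + 2 ≤ P.parts.toList.sum + (P.parts.toList.length - 1) * m := by omega
    _ ≤ _ := sum_add_mul_le_sum_partialSum hm σ

lemma isBigO_wq_of_ne_indiscrete_of_ne_hook {d : ℕ} (hd : 2 ≤ d) {P : d.Partition}
    (hA : P ≠ indiscrete d) (hB : P ≠ hook d hd) : (wq · P) =O[𝓝 0] (· ^ (d + 2)) := by
  simpa only [wq_eq_listWeight _ P rfl] using
    (isBigO_const_mul_self _ _ _).trans (isBigO_listWeight (add_two_le_sum_partialSum hd hA hB))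

lemma exists_bound_of_isBigO_nhds_zero {f g : ℝ → ℝ} (h : f =O[𝓝 0] g) :
    ∃ C : ℝ, 0 < C ∧ ∃ δ ∈ Set.Ioo (0 : ℝ) 1, ∀ q ∈ Set.Ioo (0 : ℝ) δ, |f q| ≤ C * |g q| := by
  obtain ⟨C, hC, hfg⟩ := h.exists_pos
  obtain ⟨ε, hε, hball⟩ := Metric.eventually_nhds_iff.1 hfg.bound
  refine ⟨C, hC, min ε (1 / 2), ⟨by positivity, by linarith [min_le_right ε (1 / 2)]⟩,
    fun q hq => hball ?_⟩
  rw [Real.dist_0_eq_abs, abs_of_pos hq.1]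
  exact hq.2.trans_le (min_le_left _ _)

lemma pOf_indiscrete {d : ℕ} (hd : d ≠ 0) : pOf (indiscrete d) = pNum d := by
  simp [pOf, indiscrete_parts hd]

lemma pOf_hook {d : ℕ} (hd : 2 ≤ d) : pOf (hook d hd) = pNum (d - 1) := by
  simp [pOf, hook_parts, pNum, Fintype.card_unique]

/-- For `d ≥ 2` and any real-valued function `f` on partitions of `d`,
there exist `C > 0` and `δ ∈ (0,1)` such that for all `q ∈ (0,δ)`:
`|Σ_{λ⊢d} f(λ)·p(λ)·w_q(λ) - f((d))·p(d)·q^d - f((d-1,1))·p(d-1)·q^{d+1}| ≤ C·q^{d+2}`. -/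
theorem zero_temp_stmt7 (d : ℕ) (hd : 2 ≤ d) (f : Nat.Partition d → ℝ) :
    ∃ C : ℝ, 0 < C ∧ ∃ δ ∈ Set.Ioo (0 : ℝ) 1, ∀ q ∈ Set.Ioo (0 : ℝ) δ,
      |(∑ P : Nat.Partition d, f P * (pOf P : ℝ) * wq q P)
        - f (Nat.Partition.indiscrete d) * (pNum d : ℝ) * q ^ d
        - f (hook d hd) * (pNum (d - 1) : ℝ) * q ^ (d + 1)| ≤ C * q ^ (d + 2) := by
  set A := indiscrete d
  set B := hook d hd
  have hsplit : ∀ q : ℝ, (∑ P, f P * (pOf P : ℝ) * wq q P) - f A * (pNum d : ℝ) * q ^ d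
        - f B * (pNum (d - 1) : ℝ) * q ^ (d + 1)
      = f A * (pNum d : ℝ) * (wq q A - q ^ d) + f B * (pNum (d - 1) : ℝ) * (wq q B - q ^ (d + 1))
        + ∑ P ∈ univ \ {A, B}, f P * (pOf P : ℝ) * wq q P := fun q => by
    rw [← sum_sdiff (subset_univ {A, B}), sum_pair (indiscrete_ne_hook hd),
      pOf_indiscrete (by omega), pOf_hook hd]
    ring
  have hbigO : (fun q => (∑ P, f P * (pOf P : ℝ) * wq q P) - f A * (pNum d : ℝ) * q ^ d
      - f B * (pNum (d - 1) : ℝ) * q ^ (d + 1)) =O[𝓝 0] (· ^ (d + 2)) := by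
    refine IsBigO.congr_left ?_ (fun q => (hsplit q).symm)
    refine (((isBigO_wq_indiscrete_sub_pow hd).const_mul_left _).add
      ((isBigO_wq_hook_sub_pow hd).const_mul_left _)).add (IsBigO.fun_sum fun P hP => ?_)
    obtain ⟨-, hP⟩ := Finset.mem_sdiff.1 hP
    rw [mem_insert, mem_singleton, not_or] at hP
    exact (isBigO_wq_of_ne_indiscrete_of_ne_hook hd hP.1 hP.2).const_mul_left _
  obtain ⟨C, hC, δ, hδ, hbound⟩ := exists_bound_of_isBigO_nhds_zero hbigO
  exact ⟨C, hC, δ, hδ, fun q hq => by simpa [abs_of_pos (pow_pos hq.1 _)] using hbound q hq⟩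
end

section
/- Let d ≥ 1. For each partition λ of d, the probability assigned to λ by the quantum measure on partitions of d converges as q → 0⁺ to the Dirac measure at the one-part partition (d); that is, lim_{q → 0⁺} p(λ) · w_q(λ) / ( Σ_{μ ⊢ d} p(μ) · w_q(μ) ) equals 1 if λ = (d) and equals 0 otherwise. -/
open scoped Classical

/-!
Every summand `∏ⱼ q^{Sⱼ}/(1 - q^{Sⱼ})` of `w_q(λ)` equals `q^{Σⱼ Sⱼ}` times a function that is
continuous at `0` with value `1`. Since `S_k = d` for the last index, `Σⱼ Sⱼ ≥ d`, with equality
exactly when `λ` has at most one part. Hence `w_q(λ)/q^d → [λ = (d)]` as `q → 0`, and dividing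
numerator and denominator of the probability by `q^d` gives the limit.
-/

open Filter Topology Finset

section PartialSums

variable {n : ℕ} (a : Fin n → ℕ) (σ : Equiv.Perm (Fin n))

def permPartialSum (j : Fin n) : ℕ :=
  ∑ i ∈ univ.filter (fun i => i ≤ j), a (σ i)

theorem permPartialSum_of_forall_le {j : Fin n} (hj : ∀ i, i ≤ j) :
    permPartialSum a σ j = ∑ i, a i := by
  rw [permPartialSum, filter_true_of_mem fun i _ => hj i, Equiv.sum_comp σ a]

theorem le_permPartialSum (j : Fin n) : a (σ j) ≤ permPartialSum a σ j :=
  single_le_sum (f := fun i => a (σ i)) (fun _ _ => Nat.zero_le _) (by simp)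

theorem sum_le_sum_permPartialSum : ∑ i, a i ≤ ∑ j, permPartialSum a σ j := by
  cases n with
  | zero => simp
  | succ m =>
    rw [← permPartialSum_of_forall_le a σ (Fin.le_last (n := m))]
    exact single_le_sum (fun _ _ => Nat.zero_le _) (mem_univ _)

theorem sum_permPartialSum_of_le_one (hn : n ≤ 1) :
    ∑ j, permPartialSum a σ j = ∑ i, a i := by
  obtain rfl | rfl : n = 0 ∨ n = 1 := by omega
  · simp
  · rw [Fin.sum_univ_one, permPartialSum_of_forall_le a σ fun i => (Subsingleton.elim i 0).le]

theorem sum_lt_sum_permPartialSum (ha : ∀ i, 0 < a i) (hn : 2 ≤ n) :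
    ∑ i, a i < ∑ j, permPartialSum a σ j := by
  obtain ⟨m, rfl⟩ : ∃ m, n = m + 2 := ⟨n - 2, by omega⟩
  calc ∑ i, a i < permPartialSum a σ 0 + permPartialSum a σ (Fin.last _) := by
        rw [permPartialSum_of_forall_le a σ (Fin.le_last (n := m + 1))]
        have := ha (σ 0)
        have := le_permPartialSum a σ 0
        omega
    _ = ∑ j ∈ {0, Fin.last _}, permPartialSum a σ j := (sum_pair (by simp [Fin.ext_iff])).symm
    _ ≤ ∑ j, permPartialSum a σ j := sum_le_sum_of_subset (subset_univ _)

theorem tendsto_prod_div_pow_sum (ha : ∀ i, 0 < a i) :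
    Tendsto (fun q : ℝ => (∏ j, q ^ permPartialSum a σ j / (1 - q ^ permPartialSum a σ j)) /
      q ^ ∑ i, a i) (𝓝[≠] 0) (𝓝 (if n ≤ 1 then 1 else 0)) := by
  set S := permPartialSum a σ
  set e := ∑ j, S j - ∑ i, a i
  have hS : ∀ j, S j ≠ 0 := fun j => (lt_of_lt_of_le (ha _) (le_permPartialSum a σ j)).ne'
  have hcont : Tendsto (fun q : ℝ => q ^ e * ∏ j, (1 - q ^ S j)⁻¹) (𝓝 0)
      (𝓝 ((0 : ℝ) ^ e * ∏ j, (1 - (0 : ℝ) ^ S j)⁻¹)) :=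
    ((continuous_pow e).tendsto 0).mul <| tendsto_finsetProd _ fun j _ =>
      (tendsto_const_nhds.sub ((continuous_pow _).tendsto 0)).inv₀ (by simp [zero_pow (hS j)])
  have hlim : (0 : ℝ) ^ e * ∏ j, (1 - (0 : ℝ) ^ S j)⁻¹ = if n ≤ 1 then 1 else 0 := by
    simp only [zero_pow (hS _), sub_zero, inv_one, prod_const_one, mul_one]
    split_ifs with hn
    · rw [show e = 0 from Nat.sub_eq_zero_of_le (sum_permPartialSum_of_le_one a σ hn).le, pow_zero]
    · exact zero_pow (Nat.sub_ne_zero_of_lt (sum_lt_sum_permPartialSum a σ ha (by omega)))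
  rw [← hlim]
  refine (hcont.mono_left nhdsWithin_le_nhds).congr' ?_
  filter_upwards [self_mem_nhdsWithin] with q hq
  rw [pow_sub₀ q hq (sum_le_sum_permPartialSum a σ), prod_div_distrib, prod_pow_eq_pow_sum,
    prod_inv_distrib]
  ring

end PartialSums

theorem Nat.Partition.eq_indiscrete_iff_card_parts_le_one {d : ℕ} (P : Nat.Partition d) :
    P = indiscrete d ↔ P.parts.card ≤ 1 := by
  constructor
  · rintro rfl
    rcases eq_or_ne d 0 with rfl | hd
    · simp
    · simp [indiscrete_parts hd]
  · intro h
    rcases Nat.le_one_iff_eq_zero_or_eq_one.1 h with h0 | h1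
    · obtain rfl : d = 0 := by rw [← P.parts_sum, Multiset.card_eq_zero.1 h0, Multiset.sum_zero]
      exact Subsingleton.elim _ _
    · obtain ⟨k, hk⟩ := Multiset.card_eq_one.1 h1
      obtain rfl : k = d := by simpa [hk] using P.parts_sum
      have hk0 : k ≠ 0 := (P.parts_pos (by simp [hk])).ne'
      exact Nat.Partition.ext (by rw [hk, indiscrete_parts hk0])

theorem autCard_eq_one_of_card_parts_le_one {d : ℕ} {P : Nat.Partition d}
    (h : P.parts.card ≤ 1) : autCard P = 1 :=
  prod_eq_one fun i _ => Nat.factorial_eq_one.2 ((Multiset.count_le_card i _).trans h)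

theorem pOf_pos {d : ℕ} (P : Nat.Partition d) : 0 < pOf P := by
  refine Nat.pos_of_ne_zero (Multiset.prod_ne_zero fun h => ?_)
  obtain ⟨k, -, hk⟩ := Multiset.mem_map.1 h
  exact Fintype.card_ne_zero hk

theorem tendsto_wq_div_pow {d : ℕ} (P : Nat.Partition d) :
    Tendsto (fun q : ℝ => wq q P / q ^ d) (𝓝[≠] 0)
      (𝓝 (if P = .indiscrete d then 1 else 0)) := by
  set a : Fin P.parts.toList.length → ℕ := P.parts.toList.get
  have ha : ∀ i, 0 < a i := fun i => P.parts_pos (Multiset.mem_toList.1 (List.get_mem _ _))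
  have hsum : ∑ i, a i = d := by simp [a, List.get_eq_getElem, Multiset.sum_toList, P.parts_sum]
  have hlim := (tendsto_finsetSum univ fun σ _ => tendsto_prod_div_pow_sum a σ ha).const_mul
    (1 / (autCard P : ℝ))
  rw [hsum] at hlim
  convert hlim using 2 with q
  · rw [wq, mul_div_assoc, sum_div]
    rfl
  · simp only [P.eq_indiscrete_iff_card_parts_le_one, Multiset.length_toList]
    split_ifs with h
    · simp [autCard_eq_one_of_card_parts_le_one h, Fintype.card_perm, Nat.factorial_eq_one.2 h]
    · simp

theorem tendsto_mul_div_sum_of_tendsto_ite {ι α : Type*} [Fintype ι] [DecidableEq ι]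
    {l : Filter α} {c : ι → ℝ} {f : ι → α → ℝ} {i₀ : ι} (hc : c i₀ ≠ 0)
    (hf : ∀ i, Tendsto (f i) l (𝓝 (if i = i₀ then 1 else 0))) (i : ι) :
    Tendsto (fun x => c i * f i x / ∑ j, c j * f j x) l (𝓝 (if i = i₀ then 1 else 0)) := by
  have hsum : ∑ j, c j * (if j = i₀ then 1 else 0) = c i₀ := by simp
  have hlim := ((hf i).const_mul (c i)).div
    (tendsto_finsetSum univ fun j _ => (hf j).const_mul (c j)) (hsum ▸ hc)
  rw [hsum] at hlim
  convert hlim using 2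
  · rfl
  split_ifs with h
  · rw [h, mul_one, div_self hc]
  · rw [mul_zero, zero_div]

theorem zero_temp_stmt8_general (d : ℕ) (P : Nat.Partition d) :
    Filter.Tendsto
      (fun q : ℝ =>
        (pOf P : ℝ) * wq q P / ∑ Q : Nat.Partition d, (pOf Q : ℝ) * wq q Q)
      (nhdsWithin 0 (Set.Ioi 0))
      (nhds (if P = Nat.Partition.indiscrete d then 1 else 0)) := by
  have hlim := tendsto_mul_div_sum_of_tendsto_ite (c := fun Q => (pOf Q : ℝ))
    (Nat.cast_ne_zero.2 (pOf_pos _).ne')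
    (fun Q => (tendsto_wq_div_pow Q).mono_left (nhdsGT_le_nhdsNE 0)) P
  refine hlim.congr' ?_
  filter_upwards [self_mem_nhdsWithin] with q hq
  simp only [← mul_div_assoc, ← sum_div]
  exact div_div_div_cancel_right₀ (pow_ne_zero d (ne_of_gt hq)) _ _

/-- For `d ≥ 1` and a partition `λ` of `d`, the probability
`p(λ)·w_q(λ) / Σ_{μ⊢d} p(μ)·w_q(μ)` converges as `q → 0⁺` to `1` if `λ = (d)` and `0`
otherwise, i.e. the quantum measure converges weakly to the Dirac measure at `(d)`. -/
theorem zero_temp_stmt8 (d : ℕ) (hd : 1 ≤ d) (P : Nat.Partition d) :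
    Filter.Tendsto
      (fun q : ℝ =>
        (pOf P : ℝ) * wq q P / ∑ Q : Nat.Partition d, (pOf Q : ℝ) * wq q Q)
      (nhdsWithin 0 (Set.Ioi 0))
      (nhds (if P = Nat.Partition.indiscrete d then 1 else 0)) :=
  zero_temp_stmt8_general d P
end

section
/- Let d ≥ 1 and n ≥ 2d. For each tuple T = (μ^{(1)}, …, μ^{(k)}) ∈ 𝔐^{(n)}_{d,k}, the probability P_q(T) := W_q(T) / Z^{(n)}_d(q) converges as q → 0⁺ to the uniform measure on 𝔐^{(n)}_{d,1}; that is, lim_{q → 0⁺} P_q(T) = 1/|𝔐^{(n)}_{d,1}| if k = 1, and lim_{q → 0⁺} P_q(T) = 0 if k ≥ 2. Moreover |𝔐^{(n)}_{d,1}| = p(d). -/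
open scoped Classical

/-- The colength `ℓ*(μ) = |μ| - ℓ(μ)` of a partition `μ` of `n`. -/
def colen {n : ℕ} (P : Nat.Partition n) : ℕ := n - Multiset.card P.parts

/-- `𝔐^{(n)}_{d,k}`: the set of `k`-tuples `(μ⁽¹⁾, …, μ⁽ᵏ⁾)` of partitions of `n` with
`ℓ*(μ⁽ʲ⁾) ≥ 1` for all `j` and `Σⱼ ℓ*(μ⁽ʲ⁾) = d`. -/
noncomputable def Mset (n d k : ℕ) : Finset (Fin k → Nat.Partition n) :=
  Finset.univ.filter (fun T => (∀ j, 1 ≤ colen (T j)) ∧ ∑ j, colen (T j) = d)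

/-- The weight `W_q(μ⁽¹⁾, …, μ⁽ᵏ⁾) = ∏ⱼ q^{Tⱼ}/(1 - q^{Tⱼ})`, with
`Tⱼ = ℓ*(μ⁽¹⁾) + … + ℓ*(μ⁽ʲ⁾)`. -/
noncomputable def Wq (q : ℝ) {n k : ℕ} (T : Fin k → Nat.Partition n) : ℝ :=
  ∏ j : Fin k,
    (q ^ (∑ i ∈ Finset.univ.filter (fun i => i ≤ j), colen (T i)) /
      (1 - q ^ (∑ i ∈ Finset.univ.filter (fun i => i ≤ j), colen (T i))))

/-- The partition function `Z^{(n)}_d(q) = Σ_{k=1}^d Σ_{T ∈ 𝔐^{(n)}_{d,k}} W_q(T)`. -/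
noncomputable def Zfn (n d : ℕ) (q : ℝ) : ℝ :=
  ∑ k ∈ Finset.Icc 1 d, ∑ T ∈ Mset n d k, Wq q T

/-!
Every tuple `T ∈ 𝔐^{(n)}_{d,k}` has last partial colength `T_k = d`, so its weight is
`q^d/(1-q^d)` times `k - 1` factors `q^{Tⱼ}/(1-q^{Tⱼ})` that vanish at `q = 0`. After dividing
`W_q(T)` and `Z^{(n)}_d(q)` by `q^d/(1-q^d)`, single partitions contribute `1` in the limit and
longer tuples `0`, so `P_q(T) → [k = 1] / |𝔐^{(n)}_{d,1}|`.

Deleting the first column of the Young diagram is a bijection from partitions of `n` of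
colength `d` onto partitions of `d`; its inverse needs a first column of length `n - d`,
which fits under every partition of `d` because `n - d ≥ d`.
-/

open Filter Topology Finset

def eraseFirstColumn (s : Multiset ℕ) : Multiset ℕ := (s.filter (2 ≤ ·)).map (· - 1)

/-- In the Young diagram of `t`: add a first column of length `card t + m`. -/
def addFirstColumn (t : Multiset ℕ) (m : ℕ) : Multiset ℕ :=
  t.map (· + 1) + Multiset.replicate m 1

section FirstColumn

variable {s : Multiset ℕ}

lemma filter_not_two_le_eq_replicate (hs : ∀ x ∈ s, 0 < x) :
    s.filter (¬ 2 ≤ ·) = Multiset.replicate (Multiset.card (s.filter (¬ 2 ≤ ·))) 1 :=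
  Multiset.eq_replicate.2 ⟨rfl, fun x hx => by
    have := hs x (Multiset.mem_of_mem_filter hx)
    have := Multiset.of_mem_filter hx
    omega⟩

lemma sum_map_pred_add_card (hs : ∀ x ∈ s, 0 < x) :
    (s.map (· - 1)).sum + Multiset.card s = s.sum := by
  induction s using Multiset.induction_on with
  | empty => simp
  | cons a s ih =>
    have ha := hs a (Multiset.mem_cons_self a s)
    have := ih fun x hx => hs x (Multiset.mem_cons_of_mem hx)
    simp only [Multiset.map_cons, Multiset.sum_cons, Multiset.card_cons]
    omega

lemma sum_eraseFirstColumn_add_card (hs : ∀ x ∈ s, 0 < x) :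
    (eraseFirstColumn s).sum + Multiset.card s = s.sum := by
  have hbig := sum_map_pred_add_card (s := s.filter (2 ≤ ·))
    fun x hx => hs x (Multiset.mem_of_mem_filter hx)
  have hones := congrArg Multiset.sum (filter_not_two_le_eq_replicate hs)
  rw [Multiset.sum_replicate, smul_eq_mul, mul_one] at hones
  conv_rhs => rw [← Multiset.filter_add_not (2 ≤ ·) s]
  conv_lhs => rw [← Multiset.filter_add_not (2 ≤ ·) s]
  rw [Multiset.card_add, Multiset.sum_add, eraseFirstColumn, Multiset.filter_add_not, hones]
  omega

lemma sum_addFirstColumn (t : Multiset ℕ) (m : ℕ) :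
    (addFirstColumn t m).sum = t.sum + Multiset.card t + m := by
  simp [addFirstColumn, Multiset.sum_map_add]

lemma card_addFirstColumn (t : Multiset ℕ) (m : ℕ) :
    Multiset.card (addFirstColumn t m) = Multiset.card t + m := by
  simp [addFirstColumn]

lemma card_eraseFirstColumn_le (s : Multiset ℕ) :
    Multiset.card (eraseFirstColumn s) ≤ Multiset.card s := by
  simpa [eraseFirstColumn] using Multiset.card_le_card (Multiset.filter_le _ s)

lemma eraseFirstColumn_addFirstColumn {t : Multiset ℕ} (ht : ∀ x ∈ t, 0 < x) (m : ℕ) :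
    eraseFirstColumn (addFirstColumn t m) = t := by
  have hcol : (Multiset.replicate m 1).filter (2 ≤ ·) = 0 :=
    Multiset.filter_eq_nil.2 fun x hx => by simp [Multiset.eq_of_mem_replicate hx]
  rw [eraseFirstColumn, addFirstColumn, Multiset.filter_add, hcol, add_zero,
    Multiset.filter_eq_self.2 (by simpa [Nat.one_le_iff_ne_zero, Nat.pos_iff_ne_zero] using ht),
    Multiset.map_map]
  simp

lemma addFirstColumn_eraseFirstColumn (hs : ∀ x ∈ s, 0 < x) :
    addFirstColumn (eraseFirstColumn s)
      (Multiset.card s - Multiset.card (eraseFirstColumn s)) = s := by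
  have hsplit := Multiset.filter_add_not (2 ≤ ·) s
  have hcard : Multiset.card s - Multiset.card (eraseFirstColumn s) =
      Multiset.card (s.filter (¬ 2 ≤ ·)) := by
    have := congrArg Multiset.card hsplit
    rw [Multiset.card_add] at this
    simp only [eraseFirstColumn, Multiset.card_map]
    omega
  have hbig : (s.filter (2 ≤ ·)).map ((· + 1) ∘ (· - 1)) = s.filter (2 ≤ ·) := by
    conv_rhs => rw [← Multiset.map_id (s.filter (2 ≤ ·))]
    exact Multiset.map_congr rfl fun x hx => by
      have := Multiset.of_mem_filter hx
      simp only [Function.comp_apply, id_eq]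
      omega
  rw [hcard, addFirstColumn, eraseFirstColumn, Multiset.map_map, hbig,
    ← filter_not_two_le_eq_replicate hs, hsplit]

end FirstColumn

namespace Nat.Partition

variable {n d : ℕ}

lemma card_parts_le (P : Nat.Partition n) : Multiset.card P.parts ≤ n := by
  simpa [P.parts_sum] using Multiset.card_nsmul_le_sum fun x hx => P.parts_pos hx

def eraseFirstColumn (P : Nat.Partition n) (h : colen P = d) : Nat.Partition d where
  parts := _root_.eraseFirstColumn P.parts
  parts_pos hx := by
    simp only [_root_.eraseFirstColumn, Multiset.mem_map, Multiset.mem_filter] at hx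
    obtain ⟨x, ⟨-, hx⟩, rfl⟩ := hx
    omega
  parts_sum := by
    have := sum_eraseFirstColumn_add_card fun x hx => P.parts_pos hx
    rw [P.parts_sum] at this
    unfold colen at h
    omega

/-- The new first column has length `n - d`, which is at least `ℓ(P)` as `ℓ(P) ≤ d ≤ n - d`. -/
def addFirstColumn (P : Nat.Partition d) (hn : 2 * d ≤ n) : Nat.Partition n where
  parts := _root_.addFirstColumn P.parts (n - d - Multiset.card P.parts)
  parts_pos hx := by
    rcases Multiset.mem_add.1 hx with hx | hx
    · obtain ⟨x, -, rfl⟩ := Multiset.mem_map.1 hx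
      omega
    · simp [Multiset.eq_of_mem_replicate hx]
  parts_sum := by
    have := P.card_parts_le
    rw [sum_addFirstColumn, P.parts_sum]
    omega

lemma card_addFirstColumn (P : Nat.Partition d) (hn : 2 * d ≤ n) :
    Multiset.card (P.addFirstColumn hn).parts = n - d := by
  have := P.card_parts_le
  simp only [addFirstColumn, _root_.card_addFirstColumn]
  omega

lemma colen_addFirstColumn (P : Nat.Partition d) (hn : 2 * d ≤ n) :
    colen (P.addFirstColumn hn) = d := by
  rw [colen, card_addFirstColumn]
  omega

lemma addFirstColumn_eraseFirstColumn (P : Nat.Partition n) (h : colen P = d)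
    (hn : 2 * d ≤ n) : (P.eraseFirstColumn h).addFirstColumn hn = P := by
  have := P.card_parts_le
  unfold colen at h
  ext1
  change _root_.addFirstColumn (_root_.eraseFirstColumn P.parts)
    (n - d - Multiset.card (_root_.eraseFirstColumn P.parts)) = P.parts
  rw [show n - d = Multiset.card P.parts by omega]
  exact _root_.addFirstColumn_eraseFirstColumn fun x hx => P.parts_pos hx

lemma eraseFirstColumn_addFirstColumn (P : Nat.Partition d) (hn : 2 * d ≤ n) :
    (P.addFirstColumn hn).eraseFirstColumn (P.colen_addFirstColumn hn) = P :=
  Nat.Partition.ext (_root_.eraseFirstColumn_addFirstColumn (fun _ hx => P.parts_pos hx) _)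

end Nat.Partition

section Mset

variable {n d : ℕ}

lemma mem_Mset_one (hd : 1 ≤ d) {T : Fin 1 → Nat.Partition n} :
    T ∈ Mset n d 1 ↔ colen (T 0) = d := by
  simp only [Mset, Finset.mem_filter, Finset.mem_univ, true_and, Fin.forall_fin_one,
    Fin.sum_univ_one]
  exact ⟨And.right, fun h => ⟨h ▸ hd, h⟩⟩

theorem card_Mset_one (hd : 1 ≤ d) (hn : 2 * d ≤ n) :
    (Mset n d 1).card = Fintype.card (Nat.Partition d) := by
  rw [← Finset.card_univ]
  refine Finset.card_bij' (fun T hT => (T 0).eraseFirstColumn ((mem_Mset_one hd).1 hT))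
    (fun P _ _ => P.addFirstColumn hn) (fun _ _ => Finset.mem_univ _)
    (fun P _ => (mem_Mset_one hd).2 (P.colen_addFirstColumn hn)) ?_ ?_
  · intro T hT
    funext j
    rw [Fin.fin_one_eq_zero j]
    exact Nat.Partition.addFirstColumn_eraseFirstColumn _ _ hn
  · intro P _
    exact Nat.Partition.eraseFirstColumn_addFirstColumn P hn

end Mset

noncomputable def weightFactor (q : ℝ) (m : ℕ) : ℝ := q ^ m / (1 - q ^ m)

/-- `Tⱼ = ℓ*(μ⁽¹⁾) + … + ℓ*(μ⁽ʲ⁾)`. -/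
def partialColen {n k : ℕ} (T : Fin k → Nat.Partition n) (j : Fin k) : ℕ :=
  ∑ i ∈ univ.filter (fun i => i ≤ j), colen (T i)

section Weights

variable {n d k m : ℕ}

lemma Wq_eq_prod_weightFactor (q : ℝ) (T : Fin k → Nat.Partition n) :
    Wq q T = ∏ j, weightFactor q (partialColen T j) :=
  rfl

lemma colen_le_partialColen (T : Fin k → Nat.Partition n) (j : Fin k) :
    colen (T j) ≤ partialColen T j :=
  Finset.single_le_sum (f := fun i => colen (T i)) (fun _ _ => Nat.zero_le _) (by simp)

lemma partialColen_last (T : Fin (m + 1) → Nat.Partition n) :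
    partialColen T (Fin.last m) = ∑ j, colen (T j) := by
  simp [partialColen, Fin.le_last]

lemma tendsto_weightFactor (hm : m ≠ 0) :
    Tendsto (weightFactor · m) (𝓝 0) (𝓝 0) := by
  have hpow : Tendsto (fun q : ℝ => q ^ m) (𝓝 0) (𝓝 0) := by
    simpa [zero_pow hm] using (continuous_pow m).tendsto (0 : ℝ)
  have := hpow.div (tendsto_const_nhds.sub hpow) (by simp : (1 : ℝ) - 0 ≠ 0)
  rwa [zero_div] at this

lemma weightFactor_pos {q : ℝ} (hq0 : 0 < q) (hq1 : q < 1) (hm : m ≠ 0) :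
    0 < weightFactor q m :=
  div_pos (pow_pos hq0 m) (sub_pos.2 (pow_lt_one₀ hq0.le hq1 hm))

/-- The last factor of every weight is `q^d/(1-q^d)`; all the others vanish at `q = 0`. -/
lemma tendsto_Wq_div_weightFactor (hd : d ≠ 0) {T : Fin k → Nat.Partition n}
    (hT : T ∈ Mset n d k) :
    Tendsto (fun q => Wq q T / weightFactor q d) (𝓝[>] 0) (𝓝 (if k = 1 then 1 else 0)) := by
  simp only [Mset, Finset.mem_filter, Finset.mem_univ, true_and] at hT
  obtain ⟨hpos, hsum⟩ := hT
  obtain ⟨m, rfl⟩ : ∃ m, k = m + 1 :=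
    Nat.exists_eq_succ_of_ne_zero (by rintro rfl; simp at hsum; omega)
  have hW : ∀ q, Wq q T =
      (∏ j : Fin m, weightFactor q (partialColen T j.castSucc)) * weightFactor q d := by
    intro q
    rw [Wq_eq_prod_weightFactor, Fin.prod_univ_castSucc, partialColen_last, hsum]
  have hrest : Tendsto (fun q => ∏ j : Fin m, weightFactor q (partialColen T j.castSucc))
      (𝓝 0) (𝓝 (if m + 1 = 1 then 1 else 0)) := by
    have := tendsto_finsetProd univ fun (j : Fin m) _ =>
      tendsto_weightFactor (m := partialColen T j.castSucc)
        (by have := hpos j.castSucc; have := colen_le_partialColen T j.castSucc; omega)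
    simpa [zero_pow_eq] using this
  refine (hrest.mono_left nhdsWithin_le_nhds).congr' ?_
  filter_upwards [Ioo_mem_nhdsGT one_pos] with q hq
  rw [hW, mul_div_cancel_right₀ _ (weightFactor_pos hq.1 hq.2 hd).ne']

lemma tendsto_Zfn_div_weightFactor (hd : 1 ≤ d) :
    Tendsto (fun q => Zfn n d q / weightFactor q d) (𝓝[>] 0)
      (𝓝 ((Mset n d 1).card : ℝ)) := by
  have hlim := tendsto_finsetSum (Icc 1 d) fun k _ =>
    tendsto_finsetSum (Mset n d k) fun T hT =>
      tendsto_Wq_div_weightFactor (Nat.one_le_iff_ne_zero.1 hd) hT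
  have hval : ∑ k ∈ Icc 1 d, ∑ _T ∈ Mset n d k, (if k = 1 then (1 : ℝ) else 0) =
      (Mset n d 1).card := by
    simp [Finset.sum_ite_eq', hd]
  simpa only [Zfn, Finset.sum_div, hval] using hlim

end Weights

theorem zero_temp_stmt12_general (d n : ℕ) (hd : 1 ≤ d) (hn : 2 * d ≤ n)
    (k : ℕ) (T : Fin k → Nat.Partition n) (hT : T ∈ Mset n d k) :
    (Mset n d 1).card = Fintype.card (Nat.Partition d) ∧
    Filter.Tendsto (fun q : ℝ => Wq q T / Zfn n d q)
      (nhdsWithin 0 (Set.Ioi 0))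
      (nhds (if k = 1 then (((Mset n d 1).card : ℝ))⁻¹ else 0)) := by
  have hcard := card_Mset_one hd hn
  refine ⟨hcard, ?_⟩
  have hcard_ne : ((Mset n d 1).card : ℝ) ≠ 0 := by
    rw [hcard]
    exact_mod_cast Fintype.card_ne_zero
  have hd' : d ≠ 0 := Nat.one_le_iff_ne_zero.1 hd
  have hlim := (tendsto_Wq_div_weightFactor hd' hT).div (tendsto_Zfn_div_weightFactor hd) hcard_ne
  rw [show ∀ c : ℝ, (if k = 1 then 1 else 0) / c = if k = 1 then c⁻¹ else 0 by
    intro c; split_ifs <;> simp] at hlim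
  refine hlim.congr' ?_
  filter_upwards [Ioo_mem_nhdsGT one_pos] with q hq
  exact div_div_div_cancel_right₀ (weightFactor_pos hq.1 hq.2 hd').ne' _ _

/-- For `d ≥ 1`, `n ≥ 2d` and `T ∈ 𝔐^{(n)}_{d,k}` (with `1 ≤ k ≤ d`), the
probability `P_q(T) = W_q(T)/Z^{(n)}_d(q)` converges as `q → 0⁺` to `1/|𝔐^{(n)}_{d,1}|` if
`k = 1` and to `0` if `k ≥ 2`; moreover `|𝔐^{(n)}_{d,1}| = p(d)`. -/
theorem zero_temp_stmt12 (d n : ℕ) (hd : 1 ≤ d) (hn : 2 * d ≤ n)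
    (k : ℕ) (hk1 : 1 ≤ k) (hkd : k ≤ d)
    (T : Fin k → Nat.Partition n) (hT : T ∈ Mset n d k) :
    (Mset n d 1).card = Fintype.card (Nat.Partition d) ∧
    Filter.Tendsto (fun q : ℝ => Wq q T / Zfn n d q)
      (nhdsWithin 0 (Set.Ioi 0))
      (nhds (if k = 1 then (((Mset n d 1).card : ℝ))⁻¹ else 0)) :=
  zero_temp_stmt12_general d n hd hn k T hT
end
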